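/- Let G be a cograph (a finite simple graph with no induced path on four vertices). Then every acyclic coloring of G is also a star coloring of G. -/

import Mathlib

open SimpleGraph

/-- A proper vertex coloring: adjacent vertices receive distinct colors. -/
def IsProperColoring {V α : Type*} (G : SimpleGraph V) (φ : V → α) : Prop :=
  ∀ ⦃u v : V⦄, G.Adj u v → φ u ≠ φ v

/-- An acyclic coloring: a proper coloring such that the subgraph induced by the
union of any two color classes contains no cycle. -/
def IsAcyclicColoring {V α : Type*} (G : SimpleGraph V) (φ : V → α) : Prop :=
  IsProperColoring G φ ∧
    ∀ c₁ c₂ : α, (G.induce {v | φ v = c₁ ∨ φ v = c₂}).IsAcyclic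

/-- A graph contains a path on four (distinct) vertices `a-b-c-d`,
not necessarily induced. -/
def HasP4 {V : Type*} (G : SimpleGraph V) : Prop :=
  ∃ a b c d : V, a ≠ b ∧ a ≠ c ∧ a ≠ d ∧ b ≠ c ∧ b ≠ d ∧ c ≠ d ∧
    G.Adj a b ∧ G.Adj b c ∧ G.Adj c d

/-- A star coloring: a proper coloring such that the subgraph induced by the
union of any two color classes contains no path on four vertices. -/
def IsStarColoring {V α : Type*} (G : SimpleGraph V) (φ : V → α) : Prop :=
  IsProperColoring G φ ∧
    ∀ c₁ c₂ : α, ¬ HasP4 (G.induce {v | φ v = c₁ ∨ φ v = c₂})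

/-- A cograph: a graph with no induced path on four vertices. -/
def IsCograph {V : Type*} (G : SimpleGraph V) : Prop :=
  ¬ ∃ a b c d : V, a ≠ b ∧ a ≠ c ∧ a ≠ d ∧ b ≠ c ∧ b ≠ d ∧ c ≠ d ∧
    G.Adj a b ∧ G.Adj b c ∧ G.Adj c d ∧
    ¬ G.Adj a c ∧ ¬ G.Adj a d ∧ ¬ G.Adj b d

/-- The acyclic chromatic number: the least number of colors in an acyclic coloring. -/
noncomputable def acyclicChromaticNumber {V : Type*} (G : SimpleGraph V) : ℕ :=
  sInf {n : ℕ | ∃ φ : V → Fin n, IsAcyclicColoring G φ}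

/-- The star chromatic number: the least number of colors in a star coloring. -/
noncomputable def starChromaticNumber {V : Type*} (G : SimpleGraph V) : ℕ :=
  sInf {n : ℕ | ∃ φ : V → Fin n, IsStarColoring G φ}

/-- A cycle is induced if the only edges of the graph among its vertices
are the edges of the cycle. -/
def SimpleGraph.Walk.IsInducedCycle {V : Type*} {G : SimpleGraph V} {v : V}
    (p : G.Walk v v) : Prop :=
  p.IsCycle ∧ ∀ u w : V, u ∈ p.support → w ∈ p.support → G.Adj u w → s(u, w) ∈ p.edges

/-- A graph is chordal if it has no induced cycle on four or more vertices. -/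
def IsChordal {V : Type*} (G : SimpleGraph V) : Prop :=
  ∀ (v : V) (p : G.Walk v v), p.IsInducedCycle → p.length ≤ 3

/-- The treewidth of `G`: the minimum of `ω(G⁺) - 1` over all triangulations
(chordal supergraphs on the same vertex set) `G⁺` of `G`. -/
noncomputable def treewidth {V : Type*} (G : SimpleGraph V) : ℕ :=
  sInf {k : ℕ | ∃ H : SimpleGraph V, G ≤ H ∧ IsChordal H ∧ k = H.cliqueNum - 1}

/-- An interval graph: vertices can be mapped to real closed intervals so that
two distinct vertices are adjacent iff their intervals intersect. -/
def IsIntervalGraph {V : Type*} (G : SimpleGraph V) : Prop :=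
  ∃ f : V → ℝ × ℝ, ∀ u v : V, u ≠ v →
    (G.Adj u v ↔ (Set.Icc (f u).1 (f u).2 ∩ Set.Icc (f v).1 (f v).2).Nonempty)

/-- The pathwidth of `G`: the minimum of `ω(G⁺) - 1` over all intervalizations
(interval supergraphs on the same vertex set) `G⁺` of `G`. -/
noncomputable def pathwidth {V : Type*} (G : SimpleGraph V) : ℕ :=
  sInf {k : ℕ | ∃ H : SimpleGraph V, G ≤ H ∧ IsIntervalGraph H ∧ k = H.cliqueNum - 1}

/-- The join of two graphs on disjoint vertex sets: their disjoint union together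
with all edges between the two sides. -/
def SimpleGraph.join {V₁ V₂ : Type*} (G₁ : SimpleGraph V₁) (G₂ : SimpleGraph V₂) :
    SimpleGraph (V₁ ⊕ V₂) where
  Adj x y :=
    match x, y with
    | Sum.inl a, Sum.inl b => G₁.Adj a b
    | Sum.inr a, Sum.inr b => G₂.Adj a b
    | Sum.inl _, Sum.inr _ => True
    | Sum.inr _, Sum.inl _ => True
  symm := by constructor; rintro (a | a) (b | b) h <;> simp_all <;> exact h.symm
  loopless := by constructor; rintro (a | a) h <;> simp_all

/-! The union of two colour classes of an acyclic colouring induces a forest, and it is still a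
cograph because induced `P₄`-freeness passes to induced subgraphs. In a forest, a path
`a-b-c-d` has none of the chords `ac`, `bd`, `ad` (each would close a cycle), so it would be an
induced `P₄`. Hence an acyclic cograph has no `P₄` at all. -/

namespace SimpleGraph

variable {V : Type*} {G : SimpleGraph V}

theorem IsAcyclic.not_adj_of_isPath (hG : G.IsAcyclic) {u v : V} {p : G.Walk u v}
    (hp : p.IsPath) (hlen : 2 ≤ p.length) : ¬ G.Adj u v := fun huv => by
  have hsnd : v = p.snd := hG.eq_snd_of_adj_start hp huv p.end_mem_support
  have : 1 = p.length := (hp.getVert_eq_end_iff (by omega)).mp hsnd.symm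
  omega

theorem IsAcyclic.not_adj_of_adj_of_adj (hG : G.IsAcyclic) {a b c : V} (hab : G.Adj a b)
    (hbc : G.Adj b c) : ¬ G.Adj a c := fun hac =>
  hG.not_adj_of_isPath (p := .cons hab (.cons hbc .nil))
    (by simp [hab.ne, hbc.ne, hac.ne]) (by simp) hac

end SimpleGraph

theorem IsCograph.of_embedding {V W : Type*} {G : SimpleGraph V} {H : SimpleGraph W}
    (f : H ↪g G) (hG : IsCograph G) : IsCograph H := by
  rintro ⟨a, b, c, d, hab, hac, had, hbc, hbd, hcd, eab, ebc, ecd, nac, nad, nbd⟩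
  exact hG ⟨f a, f b, f c, f d, f.injective.ne hab, f.injective.ne hac, f.injective.ne had,
    f.injective.ne hbc, f.injective.ne hbd, f.injective.ne hcd, f.map_adj_iff.2 eab,
    f.map_adj_iff.2 ebc, f.map_adj_iff.2 ecd, mt f.map_adj_iff.1 nac, mt f.map_adj_iff.1 nad,
    mt f.map_adj_iff.1 nbd⟩

theorem IsCograph.not_hasP4_of_isAcyclic {V : Type*} {G : SimpleGraph V} (hG : IsCograph G)
    (hacyc : G.IsAcyclic) : ¬ HasP4 G := by
  rintro ⟨a, b, c, d, hab, hac, had, hbc, hbd, hcd, eab, ebc, ecd⟩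
  have hpath : (Walk.cons eab (.cons ebc (.cons ecd .nil))).IsPath := by
    simp [hab, hac, had, hbc, hbd, hcd]
  exact hG ⟨a, b, c, d, hab, hac, had, hbc, hbd, hcd, eab, ebc, ecd,
    hacyc.not_adj_of_adj_of_adj eab ebc, hacyc.not_adj_of_isPath hpath (by simp),
    hacyc.not_adj_of_adj_of_adj ebc ecd⟩

theorem acyclic_coloring_is_star_coloring_of_cograph_general {V : Type*}
    (G : SimpleGraph V) (hG : IsCograph G) (φ : V → ℕ)
    (hφ : IsAcyclicColoring G φ) : IsStarColoring G φ :=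
  ⟨hφ.1, fun c₁ c₂ => (hG.of_embedding (Embedding.induce _)).not_hasP4_of_isAcyclic (hφ.2 c₁ c₂)⟩

/-- Every acyclic coloring of a cograph is a star coloring. -/
theorem acyclic_coloring_is_star_coloring_of_cograph {V : Type*} [Fintype V]
    (G : SimpleGraph V) (hG : IsCograph G) (φ : V → ℕ)
    (hφ : IsAcyclicColoring G φ) : IsStarColoring G φ :=
  acyclic_coloring_is_star_coloring_of_cograph_general G hG φ hφ
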